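/- Let G be a connected graph, H a biconnected component of G containing at least two vertices, and let k_max be the maximum length of a min-cycle of G all of whose vertices lie in H. Then for every edge e = {u,v} of G with both endpoints in H, the distance from u to v in G with e deleted satisfies d_{G−e}(u,v) ≤ d_G(u,v) + k_max − 2. -/

import Mathlib

/-!
Let `P` be a shortest `v`-`u` path in `G - uv`; one of the two disjoint `u`-`v` paths avoids `uv`,
so `P` exists. Closing `P` with `uv` gives a cycle `C` of length `d_{G-uv}(u, v) + 1`.

`C` is a min-cycle: if two vertices `a, b` of `C` were closer in `G` than along either arc of `C`,
a shortest `a`-`b` path would, whether or not it uses `uv`, combine with pieces of `P` into a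
`v`-`u` walk in `G - uv` shorter than `P`.

`C` lies in `H`: a vertex `h ∈ H` off `C` has two disjoint paths to `u` and two to `v`; from them
one extracts a fan, two paths from `h` to distinct vertices of `C` meeting `C` and each other only
at their ends. Closing the fan with a suitable arc of `C` gives a cycle through `h` and any
prescribed vertex of `C`, so `H ∪ C` still has two disjoint paths between any two of its
vertices, and maximality of `H` forces `C ⊆ H`. Hence `d_{G-uv}(u, v) + 1 ≤ kmax`.
-/
open SimpleGraph

/-- A cycle `c` in `G` is a min-cycle if for every two vertices `u,v` on the cycle,
the distance between `u` and `v` in the graph consisting of the edges of the cycle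
(i.e. the distance along the cycle) equals their distance in `G`. -/
def IsMinCycle {V : Type*} {G : SimpleGraph V} {a : V} (c : G.Walk a a) : Prop :=
  c.IsCycle ∧ ∀ u ∈ c.support, ∀ v ∈ c.support,
    (SimpleGraph.fromEdgeSet {e | e ∈ c.edges}).dist u v = G.dist u v
/-- There exist two internally vertex-disjoint (distinct) paths between `u` and `v` in `G`. -/
def TwoDisjointPaths {V : Type*} (G : SimpleGraph V) (u v : V) : Prop :=
  ∃ p q : G.Walk u v, p.IsPath ∧ q.IsPath ∧ p ≠ q ∧
    ∀ x, x ∈ p.support → x ∈ q.support → x = u ∨ x = v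

/-- `H` is a biconnected component of `G`: a maximal set of vertices such that between
any two distinct vertices of `H` there are two internally vertex-disjoint paths in `G`. -/
def IsBiconnectedComponent {V : Type*} (G : SimpleGraph V) (H : Set V) : Prop :=
  (∀ u ∈ H, ∀ v ∈ H, u ≠ v → TwoDisjointPaths G u v) ∧
  ∀ H' : Set V, H ⊆ H' → (∀ u ∈ H', ∀ v ∈ H', u ≠ v → TwoDisjointPaths G u v) → H' = H

namespace SimpleGraph.Walk

variable {V : Type*} {G : SimpleGraph V} {a b m w : V}

lemma IsPath.start_notMem_support_tail {p : G.Walk a b} (hp : p.IsPath) : a ∉ p.support.tail :=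
  (List.nodup_cons.mp (p.cons_tail_support ▸ hp.support_nodup)).1

lemma IsPath.append_of_inter {p : G.Walk a m} {q : G.Walk m b} (hp : p.IsPath) (hq : q.IsPath)
    (h : ∀ w ∈ p.support, w ∈ q.support → w = m) : (p.append q).IsPath := by
  refine IsPath.mk' ?_
  rw [support_append]
  refine hp.support_nodup.append hq.support_nodup.tail fun w hwp hwq => ?_
  obtain rfl := h w hwp (List.mem_of_mem_tail hwq)
  exact hq.start_notMem_support_tail hwq

lemma IsCycle.eq_or_eq_of_mem_support_append {p : G.Walk a b} {q : G.Walk b a}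
    (hc : (p.append q).IsCycle) (hwp : w ∈ p.support) (hwq : w ∈ q.support) : w = a ∨ w = b := by
  have hdisj := List.disjoint_of_nodup_append (tail_support_append p q ▸ hc.support_nodup)
  by_contra! hw
  rw [← p.cons_tail_support, List.mem_cons] at hwp
  rw [← q.cons_tail_support, List.mem_cons] at hwq
  exact hdisj (hwp.resolve_left hw.1) (hwq.resolve_left hw.2)

lemma isCycle_append_of_inter {p : G.Walk a b} {q : G.Walk b a} (hp : p.IsPath) (hq : q.IsPath)
    (h : ∀ w ∈ p.support, w ∈ q.support → w = a ∨ w = b) (hlen : 1 < p.length ∨ 1 < q.length) :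
    (p.append q).IsCycle := by
  refine hp.isCycle_append hq (fun w hwp hwq => ?_) hlen
  rcases h w (List.mem_of_mem_tail hwp) (List.mem_of_mem_tail hwq) with rfl | rfl
  exacts [hp.start_notMem_support_tail hwp, hq.start_notMem_support_tail hwq]

lemma IsCycle.exists_append [DecidableEq V] {c : G.Walk w w} (hc : c.IsCycle)
    (ha : a ∈ c.support) (hb : b ∈ c.support) :
    ∃ (p : G.Walk a b) (q : G.Walk b a), (p.append q).IsCycle ∧
      ∀ x, x ∈ (p.append q).support ↔ x ∈ c.support := by
  have hb' : b ∈ (c.rotate a ha).support := (mem_support_rotate_iff ..).2 hb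
  refine ⟨_, _, (take_spec _ hb').symm ▸ hc.rotate ha, fun x => ?_⟩
  rw [take_spec, mem_support_rotate_iff]

lemma IsTrail.exists_split_of_mem_edges {u v : V} {Q : G.Walk a b}
    (hQ : Q.IsTrail) (he : s(u, v) ∈ Q.edges) :
    ∃ x y, s(x, y) = s(u, v) ∧ ∃ (Q₁ : G.Walk a x) (Q₂ : G.Walk y b),
      Q₁.length + 1 + Q₂.length = Q.length ∧ s(u, v) ∉ Q₁.edges ∧ s(u, v) ∉ Q₂.edges := by
  have hnodup := hQ.edges_nodup
  rcases (isSubwalk_toWalk_iff_mem_edges (Q.adj_of_mem_edges he)).2 he with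
    ⟨Q₁, Q₂, hQ⟩ | ⟨Q₁, Q₂, hQ⟩
  · refine ⟨u, v, rfl, Q₁, Q₂, by simp [hQ], ?_⟩
    rw [hQ] at hnodup
    simp_all [List.nodup_append]
  · refine ⟨v, u, Sym2.eq_swap, Q₁, Q₂, by simp [hQ], ?_⟩
    rw [hQ] at hnodup
    simp_all [List.nodup_append, Sym2.eq_swap]

lemma exists_eq_append_append {u v : V} {p : G.Walk u v}
    (ha : a ∈ p.support) (hb : b ∈ p.support) :
    (∃ (p₁ : G.Walk u a) (p₂ : G.Walk a b) (p₃ : G.Walk b v), p = p₁.append (p₂.append p₃)) ∨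
      ∃ (p₁ : G.Walk u b) (p₂ : G.Walk b a) (p₃ : G.Walk a v), p = p₁.append (p₂.append p₃) := by
  obtain ⟨q, r, rfl⟩ := p.mem_support_iff_exists_append.1 ha
  rcases (mem_support_append_iff q r).1 hb with hbq | hbr
  · obtain ⟨q₁, q₂, rfl⟩ := q.mem_support_iff_exists_append.1 hbq
    exact .inr ⟨q₁, q₂, r, (append_assoc ..).symm⟩
  · obtain ⟨r₁, r₂, rfl⟩ := r.mem_support_iff_exists_append.1 hbr
    exact .inl ⟨q, r₁, r₂, rfl⟩

lemma mem_edgeSet_fromEdgeSet {s : Set (Sym2 V)} (W : G.Walk a b)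
    (hW : ∀ e ∈ W.edges, e ∈ s) : ∀ e ∈ W.edges, e ∈ (fromEdgeSet s).edgeSet := fun e he => by
  rw [edgeSet_fromEdgeSet]
  exact ⟨hW e he, G.not_isDiag_of_mem_edgeSet (W.edges_subset_edgeSet he)⟩

lemma IsCycle.twoDisjointPaths [DecidableEq V] {c : G.Walk w w} (hc : c.IsCycle)
    (ha : a ∈ c.support) (hb : b ∈ c.support) (hab : a ≠ b) : TwoDisjointPaths G a b := by
  obtain ⟨p, q, hpq, -⟩ := hc.exists_append ha hb
  refine ⟨p, q.reverse, hpq.isPath_of_append_left (not_nil_of_ne hab.symm),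
    (hpq.isPath_of_append_right (not_nil_of_ne hab)).reverse, fun h => ?_, fun x hxp hxq => ?_⟩
  · obtain ⟨e, he⟩ := List.exists_mem_of_ne_nil p.edges
      (by simpa [edges_eq_nil] using not_nil_of_ne (p := p) hab)
    have hnodup := hpq.isTrail.edges_nodup
    rw [edges_append] at hnodup
    exact List.disjoint_of_nodup_append hnodup he (by simpa [h] using he)
  · exact hpq.eq_or_eq_of_mem_support_append hxp (by simpa using hxq)

lemma IsCycle.exists_isPath_mem_support [DecidableEq V] {c : G.Walk w w} (hc : c.IsCycle)
    (ha : a ∈ c.support) (hb : b ∈ c.support) (hab : a ≠ b) (hx : m ∈ c.support) :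
    ∃ A : G.Walk a b, A.IsPath ∧ m ∈ A.support ∧ ∀ x ∈ A.support, x ∈ c.support := by
  obtain ⟨p, q, hpq, hsupp⟩ := hc.exists_append ha hb
  have hp := hpq.isPath_of_append_left (not_nil_of_ne hab.symm)
  have hq := hpq.isPath_of_append_right (not_nil_of_ne hab)
  rcases (mem_support_append_iff p q).1 ((hsupp m).2 hx) with hxp | hxq
  · exact ⟨p, hp, hxp, fun x h => (hsupp x).1 ((mem_support_append_iff p q).2 (.inl h))⟩
  · exact ⟨q.reverse, hq.reverse, by simpa using hxq,
      fun x h => (hsupp x).1 ((mem_support_append_iff p q).2 (.inr (by simpa using h)))⟩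

def MeetsAtEndOnly (S : Set V) (p : G.Walk a b) : Prop :=
  ∀ x ∈ p.support, x ∈ S → x = b

structure IsFan (S : Set V) {h c₁ c₂ : V} (f₁ : G.Walk h c₁) (f₂ : G.Walk h c₂) : Prop where
  mem₁ : c₁ ∈ S
  mem₂ : c₂ ∈ S
  ne : c₁ ≠ c₂
  isPath₁ : f₁.IsPath
  isPath₂ : f₂.IsPath
  meetsAtEndOnly₁ : f₁.MeetsAtEndOnly S
  meetsAtEndOnly₂ : f₂.MeetsAtEndOnly S
  inter : ∀ x ∈ f₁.support, x ∈ f₂.support → x = h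

lemma exists_append_meetsAtEndOnly (S : Set V) (p : G.Walk a b) (hb : b ∈ S) :
    ∃ z ∈ S, ∃ (q : G.Walk a z) (r : G.Walk z b), p = q.append r ∧ q.MeetsAtEndOnly S := by
  induction p with
  | nil => exact ⟨_, hb, nil, nil, rfl, fun x hx _ => by simpa using hx⟩
  | @cons a _ _ had p ih =>
    by_cases ha : a ∈ S
    · exact ⟨a, ha, nil, cons had p, rfl, fun x hx _ => by simpa using hx⟩
    · obtain ⟨z, hz, q, r, rfl, hq⟩ := ih hb
      refine ⟨z, hz, cons had q, r, rfl, fun x hx hxS => ?_⟩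
      rcases List.mem_cons.1 (support_cons had q ▸ hx) with rfl | hx
      exacts [absurd hxS ha, hq x hx hxS]

lemma isFan_append_takeUntil [DecidableEq V] {S : Set V} {h v w₀ z : V} {r₁ r₂ : G.Walk h v}
    (hr₁ : r₁.IsPath) (hr₂ : r₂.IsPath) (hr₁S : r₁.MeetsAtEndOnly S)
    (hr₂S : r₂.MeetsAtEndOnly S) (hr : ∀ x ∈ r₁.support, x ∈ r₂.support → x = h ∨ x = v)
    (hv : v ∈ S) (hw₀ : w₀ ∈ r₁.support) {q : G.Walk w₀ z} (hq : q.IsPath)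
    (hqS : q.MeetsAtEndOnly S) (hqr : ∀ x ∈ q.support, x ∈ r₁.support ∨ x ∈ r₂.support → x = w₀)
    (hz : z ∈ S) (hzv : z ≠ v) :
    IsFan S ((r₁.takeUntil w₀ hw₀).append q) r₂ := by
  have hw₀v : w₀ ≠ v := fun e => hzv (hqS v (e ▸ q.start_mem_support) hv).symm
  have hvT : v ∉ (r₁.takeUntil w₀ hw₀).support :=
    endpoint_notMem_support_takeUntil hr₁ hw₀ hw₀v.symm
  have hT := r₁.support_takeUntil_subset_support hw₀
  refine ⟨hz, hv, hzv, (hr₁.takeUntil hw₀).append_of_inter hq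
    fun x hxT hxq => hqr x hxq (.inl (hT hxT)), hr₂, fun x hx hxS => ?_, hr₂S, fun x hx hx₂ => ?_⟩
  · rcases (mem_support_append_iff _ _).1 hx with hxT | hxq
    · exact absurd (hr₁S x (hT hxT) hxS ▸ hxT) hvT
    · exact hqS x hxq hxS
  · rcases (mem_support_append_iff _ _).1 hx with hxT | hxq
    · exact (hr x (hT hxT) hx₂).resolve_right fun e => hvT (e ▸ hxT)
    · obtain rfl := hqr x hxq (.inr hx₂)
      exact (hr x hw₀ hx₂).resolve_right hw₀v

/-- Reroute `r₁` or `r₂` along `s`, from the last vertex of `s` on `r₁ ∪ r₂`. -/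
lemma exists_isFan_of_meetsAtEndOnly [DecidableEq V] {S : Set V} {h v z : V} {s : G.Walk h z}
    (hs : s.IsPath) (hsS : s.MeetsAtEndOnly S) (hz : z ∈ S) (hzv : z ≠ v) {r₁ r₂ : G.Walk h v}
    (hr₁ : r₁.IsPath) (hr₂ : r₂.IsPath) (hr₁S : r₁.MeetsAtEndOnly S)
    (hr₂S : r₂.MeetsAtEndOnly S) (hr : ∀ x ∈ r₁.support, x ∈ r₂.support → x = h ∨ x = v)
    (hv : v ∈ S) :
    ∃ (c₁ c₂ : V) (f₁ : G.Walk h c₁) (f₂ : G.Walk h c₂), IsFan S f₁ f₂ := by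
  obtain ⟨w₀, hw₀, q, r, hsqr, hqR⟩ := s.reverse.exists_append_meetsAtEndOnly
    {x | x ∈ r₁.support ∨ x ∈ r₂.support} (.inl r₁.start_mem_support)
  have hq : q.reverse.IsPath := (hsqr ▸ hs.reverse).of_append_left.reverse
  have hqs : ∀ x ∈ q.reverse.support, x ∈ s.support := fun x hx => by
    have := support_subset_support_append_left q r (by simpa using hx)
    rwa [← hsqr, support_reverse, List.mem_reverse] at this
  have hqS : q.reverse.MeetsAtEndOnly S := fun x hx hxS => hsS x (hqs x hx) hxS
  have hqr : ∀ x ∈ q.reverse.support, x ∈ r₁.support ∨ x ∈ r₂.support → x = w₀ :=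
    fun x hx hxR => hqR x (by simpa using hx) hxR
  rcases hw₀ with hw₀ | hw₀
  · exact ⟨_, _, _, _, isFan_append_takeUntil hr₁ hr₂ hr₁S hr₂S hr hv hw₀ hq hqS hqr hz hzv⟩
  · exact ⟨_, _, _, _, isFan_append_takeUntil hr₂ hr₁ hr₂S hr₁S (fun x h₂ h₁ => hr x h₁ h₂) hv hw₀
      hq hqS (fun x hx hxR => hqr x hx hxR.symm) hz hzv⟩

lemma IsFan.isCycle_append {S : Set V} {h c₁ c₂ : V} {f₁ : G.Walk h c₁} {f₂ : G.Walk h c₂}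
    (hf : IsFan S f₁ f₂) {A : G.Walk c₁ c₂} (hA : A.IsPath) (hAS : ∀ x ∈ A.support, x ∈ S) :
    (f₁.append (A.append f₂.reverse)).IsCycle := by
  have hhc₂ : h ≠ c₂ := fun e =>
    hf.ne ((hf.meetsAtEndOnly₁ h f₁.start_mem_support (e ▸ hf.mem₂)).symm.trans e)
  refine isCycle_append_of_inter hf.isPath₁ (hA.append_of_inter hf.isPath₂.reverse
    fun x hxA hxf => hf.meetsAtEndOnly₂ x (by simpa using hxf) (hAS x hxA)) (fun x hx₁ hx => ?_) ?_
  · rcases (mem_support_append_iff _ _).1 hx with hxA | hxf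
    · exact .inr (hf.meetsAtEndOnly₁ x hx₁ (hAS x hxA))
    · exact .inl (hf.inter x hx₁ (by simpa using hxf))
  · have := not_nil_iff_lt_length.1 (not_nil_of_ne (p := A) hf.ne)
    have := not_nil_iff_lt_length.1 (not_nil_of_ne (p := f₂) hhc₂)
    simp only [length_append, length_reverse]
    omega

end SimpleGraph.Walk

namespace SimpleGraph

variable {V : Type*} {G : SimpleGraph V}

lemma dist_fromEdgeSet_le_length {s : Set (Sym2 V)} {a b : V} (W : G.Walk a b)
    (hW : ∀ e ∈ W.edges, e ∈ s) : (fromEdgeSet s).dist a b ≤ W.length := by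
  simpa using dist_le (W.transfer _ (W.mem_edgeSet_fromEdgeSet hW))

lemma dist_le_dist_fromEdgeSet_edges {w w' a b : V} (c : G.Walk w w') (ha : a ∈ c.support)
    (hb : b ∈ c.support) : G.dist a b ≤ (fromEdgeSet {e | e ∈ c.edges}).dist a b := by
  have hle : fromEdgeSet {e | e ∈ c.edges} ≤ G := fun x y hxy =>
    c.adj_of_mem_edges ((fromEdgeSet_adj _).1 hxy).1
  let c' := c.transfer _ (c.mem_edgeSet_fromEdgeSet fun _ => id)
  obtain ⟨qa, -, -⟩ := c'.mem_support_iff_exists_append.1 (by simpa [c'] using ha)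
  obtain ⟨qb, -, -⟩ := c'.mem_support_iff_exists_append.1 (by simpa [c'] using hb)
  exact (qa.reverse.append qb).reachable.dist_anti hle

end SimpleGraph

open SimpleGraph Walk

section

variable {V : Type*} {G : SimpleGraph V}

lemma TwoDisjointPaths.symm {u v : V} (h : TwoDisjointPaths G u v) : TwoDisjointPaths G v u := by
  obtain ⟨p, q, hp, hq, hpq, hint⟩ := h
  refine ⟨p.reverse, q.reverse, hp.reverse, hq.reverse, fun h => hpq ?_, fun x hx hy => ?_⟩
  · simpa using congrArg Walk.reverse h
  · simp only [support_reverse, List.mem_reverse] at hx hy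
    exact (hint x hx hy).symm

lemma TwoDisjointPaths.reachable_deleteEdges {u v : V} (h : TwoDisjointPaths G u v) :
    (G.deleteEdges {s(u, v)}).Reachable u v := by
  obtain ⟨p, q, hp, hq, hpq, -⟩ := h
  by_cases hpe : s(u, v) ∈ p.edges
  · by_cases hqe : s(u, v) ∈ q.edges
    · exact absurd ((hp.eq_adj_toWalk_of_mem_edges hpe).trans
        (hq.eq_adj_toWalk_of_mem_edges hqe).symm) hpq
    · exact (q.toDeleteEdge _ hqe).reachable
  · exact (p.toDeleteEdge _ hpe).reachable

lemma TwoDisjointPaths.exists_isPath_meetsAtEndOnly {S : Set V} {h u v : V}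
    (hhu : TwoDisjointPaths G h u) (hh : h ∉ S) (hu : u ∈ S) (hvu : v ≠ u) :
    ∃ z ∈ S, z ≠ v ∧ ∃ s : G.Walk h z, s.IsPath ∧ s.MeetsAtEndOnly S := by
  obtain ⟨p, q, hp, hq, -, hpq⟩ := hhu
  obtain ⟨z₁, hz₁, p₁, p₂, rfl, hp₁⟩ := p.exists_append_meetsAtEndOnly S hu
  obtain ⟨z₂, hz₂, q₁, q₂, rfl, hq₁⟩ := q.exists_append_meetsAtEndOnly S hu
  by_cases h₁ : z₁ = v
  · by_cases h₂ : z₂ = v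
    · rcases hpq v (h₁ ▸ support_subset_support_append_left _ _ p₁.end_mem_support)
        (h₂ ▸ support_subset_support_append_left _ _ q₁.end_mem_support) with rfl | rfl
      exacts [absurd (h₁ ▸ hz₁) hh, absurd rfl hvu]
    · exact ⟨z₂, hz₂, h₂, q₁, hq.of_append_left, hq₁⟩
  · exact ⟨z₁, hz₁, h₁, p₁, hp.of_append_left, hp₁⟩

lemma exists_isFan [DecidableEq V] {S : Set V} {h u v : V} (hh : h ∉ S) (hu : u ∈ S)
    (hv : v ∈ S) (huv : u ≠ v) (hhu : TwoDisjointPaths G h u) (hhv : TwoDisjointPaths G h v) :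
    ∃ (c₁ c₂ : V) (f₁ : G.Walk h c₁) (f₂ : G.Walk h c₂), IsFan S f₁ f₂ := by
  obtain ⟨z, hz, hzv, s, hs, hsS⟩ := hhu.exists_isPath_meetsAtEndOnly hh hu huv.symm
  obtain ⟨R₁, R₂, hR₁, hR₂, -, hR⟩ := hhv
  obtain ⟨y₁, hy₁, r₁, _, rfl, hr₁S⟩ := R₁.exists_append_meetsAtEndOnly S hv
  obtain ⟨y₂, hy₂, r₂, _, rfl, hr₂S⟩ := R₂.exists_append_meetsAtEndOnly S hv
  have hr : ∀ x ∈ r₁.support, x ∈ r₂.support → x = h ∨ x = v := fun x h₁ h₂ =>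
    hR x (support_subset_support_append_left _ _ h₁) (support_subset_support_append_left _ _ h₂)
  by_cases hy : y₁ = y₂
  · subst hy
    obtain rfl : y₁ = v :=
      (hr y₁ r₁.end_mem_support r₂.end_mem_support).resolve_left fun e => hh (e ▸ hy₁)
    exact exists_isFan_of_meetsAtEndOnly hs hsS hz hzv hR₁.of_append_left hR₂.of_append_left
      hr₁S hr₂S hr hy₁
  · refine ⟨_, _, r₁, r₂, hy₁, hy₂, hy, hR₁.of_append_left, hR₂.of_append_left, hr₁S, hr₂S,
      fun x h₁ h₂ => (hr x h₁ h₂).resolve_right ?_⟩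
    rintro rfl
    exact hy ((hr₁S x h₁ hv).symm.trans (hr₂S x h₂ hv))

lemma SimpleGraph.Walk.IsCycle.twoDisjointPaths_of_notMem [DecidableEq V] {w u v h x : V}
    {c : G.Walk w w} (hc : c.IsCycle) (hu : u ∈ c.support) (hv : v ∈ c.support) (huv : u ≠ v)
    (hh : h ∉ c.support) (hhu : TwoDisjointPaths G h u) (hhv : TwoDisjointPaths G h v)
    (hx : x ∈ c.support) : TwoDisjointPaths G x h := by
  obtain ⟨c₁, c₂, f₁, f₂, hf⟩ := exists_isFan (S := {y | y ∈ c.support}) hh hu hv huv hhu hhv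
  obtain ⟨A, hA, hxA, hAc⟩ := hc.exists_isPath_mem_support hf.mem₁ hf.mem₂ hf.ne hx
  exact (hf.isCycle_append hA hAc).twoDisjointPaths (by simp [hxA]) (by simp)
    fun e => hh (e ▸ hx)

lemma IsBiconnectedComponent.support_subset_of_isCycle {H : Set V}
    (hH : IsBiconnectedComponent G H) {w u v : V} {c : G.Walk w w} (hc : c.IsCycle)
    (hu : u ∈ H) (hv : v ∈ H) (huc : u ∈ c.support) (hvc : v ∈ c.support) (huv : u ≠ v) :
    ∀ x ∈ c.support, x ∈ H := by
  classical
  have hmixed : ∀ x ∈ c.support, ∀ h ∈ H, h ∉ c.support → TwoDisjointPaths G x h :=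
    fun x hx h hh hhc => hc.twoDisjointPaths_of_notMem huc hvc huv hhc
      (hH.1 h hh u hu fun e => hhc (e ▸ huc)) (hH.1 h hh v hv fun e => hhc (e ▸ hvc)) hx
  have hH' := hH.2 (H ∪ {x | x ∈ c.support}) Set.subset_union_left fun a ha b hb hab => by
    by_cases hac : a ∈ c.support <;> by_cases hbc : b ∈ c.support
    · exact hc.twoDisjointPaths hac hbc hab
    · exact hmixed a hac b (hb.resolve_right hbc) hbc
    · exact (hmixed b hbc a (ha.resolve_right hac) hac).symm
    · exact hH.1 a (ha.resolve_right hac) b (hb.resolve_right hbc) hab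
  exact fun x hx => hH' ▸ Or.inr hx

/-- A shortcut from `a` to `b`, whether or not it uses `s(u, v)`, would give a `v`-`u` walk
avoiding `s(u, v)` shorter than `P₁ P₂ P₃`. -/
lemma min_length_le_dist {u v a b : V} (P₁ : G.Walk v a) (P₂ : G.Walk a b) (P₃ : G.Walk b u)
    (he : s(u, v) ∉ (P₁.append (P₂.append P₃)).edges)
    (hmin : ∀ W : G.Walk v u, s(u, v) ∉ W.edges → (P₁.append (P₂.append P₃)).length ≤ W.length) :
    min P₂.length (P₁.length + 1 + P₃.length) ≤ G.dist a b := by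
  have hmin' : ∀ x y, s(x, y) = s(u, v) → ∀ W : G.Walk y x, s(u, v) ∉ W.edges →
      (P₁.append (P₂.append P₃)).length ≤ W.length := by
    intro x y hxy W hW
    rcases Sym2.eq_iff.1 hxy with ⟨rfl, rfl⟩ | ⟨rfl, rfl⟩
    · exact hmin W hW
    · simpa using hmin W.reverse (by simpa using hW)
  obtain ⟨Q, hQ, hQlen⟩ := P₂.reachable.exists_path_of_dist
  rw [← hQlen]
  by_contra! hlt
  simp only [edges_append, List.mem_append, not_or, length_append, lt_min_iff] at he hmin' hlt
  by_cases hQe : s(u, v) ∈ Q.edges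
  · obtain ⟨x, y, hxy, Q₁, Q₂, hlen, hQ₁, hQ₂⟩ := hQ.isTrail.exists_split_of_mem_edges hQe
    have := hmin' x y hxy (Q₂.append (P₂.reverse.append Q₁)) (by simp [*])
    simp only [length_append, length_reverse] at this
    omega
  · have := hmin (P₁.append (Q.append P₃)) (by simp [*])
    simp only [length_append] at this
    omega

lemma isMinCycle_cons {u v : V} (huv : G.Adj u v) {P : G.Walk v u} (hP : P.IsPath)
    (he : s(u, v) ∉ P.edges) (hmin : ∀ W : G.Walk v u, s(u, v) ∉ W.edges → P.length ≤ W.length) :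
    IsMinCycle (cons huv P) := by
  have hsplit : ∀ {x y} (P₁ : G.Walk v x) (P₂ : G.Walk x y) (P₃ : G.Walk y u),
      P = P₁.append (P₂.append P₃) →
      (fromEdgeSet {e | e ∈ (cons huv P).edges}).dist x y ≤ G.dist x y := by
    rintro x y P₁ P₂ P₃ rfl
    refine le_trans (le_min ?_ ?_) (min_length_le_dist P₁ P₂ P₃ he hmin)
    · exact dist_fromEdgeSet_le_length P₂ fun e he => by simp [he]
    · refine (dist_fromEdgeSet_le_length (P₁.reverse.append (cons huv.symm P₃.reverse))
        fun e he => ?_).trans_eq (by simp; omega)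
      simp only [edges_append, edges_reverse, edges_cons, List.mem_append, List.mem_reverse,
        List.mem_cons] at he
      rcases he with he | rfl | he <;> simp [he, Sym2.eq_swap]
  have hsupp : ∀ x ∈ (cons huv P).support, x ∈ P.support := by
    simp [P.end_mem_support]
  refine ⟨(cons_isCycle_iff P huv).2 ⟨hP, he⟩,
    fun a ha b hb => le_antisymm ?_ (dist_le_dist_fromEdgeSet_edges _ ha hb)⟩
  rcases exists_eq_append_append (hsupp a ha) (hsupp b hb) with
    ⟨P₁, P₂, P₃, hP⟩ | ⟨P₁, P₂, P₃, hP⟩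
  · exact hsplit P₁ P₂ P₃ hP
  · rw [SimpleGraph.dist_comm, G.dist_comm]
    exact hsplit P₁ P₂ P₃ hP

end

theorem delete_edge_dist_increase_general {V : Type*}
    (G : SimpleGraph V)
    (H : Set V) (hH : IsBiconnectedComponent G H)
    (kmax : ℕ)
    (hkub : ∀ (a : V) (c : G.Walk a a), IsMinCycle c → (∀ x ∈ c.support, x ∈ H) →
      c.length ≤ kmax)
    (u v : V) (hu : u ∈ H) (hv : v ∈ H) (huv : G.Adj u v) :
    ((G.deleteEdges {s(u,v)}).dist u v : ℝ) ≤ G.dist u v + kmax - 2 := by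
  obtain ⟨P, hP, hPlen⟩ :=
    (hH.1 u hu v hv huv.ne).reachable_deleteEdges.symm.exists_path_of_dist
  let Q := P.mapLe (G.deleteEdges_le {s(u, v)})
  have hQe : s(u, v) ∉ Q.edges := fun he => by
    have := P.edges_subset_edgeSet (edges_mapLe_eq_edges .. ▸ he)
    rw [edgeSet_deleteEdges] at this
    exact this.2 rfl
  have hQmin : ∀ W : G.Walk v u, s(u, v) ∉ W.edges → Q.length ≤ W.length := fun W hW => by
    simpa [Q, hPlen] using dist_le (W.toDeleteEdge _ hW)
  have hc := isMinCycle_cons huv (hP.mapLe _) hQe hQmin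
  have hcH := hH.support_subset_of_isCycle hc.1 hu hv (by simp) (by simp) huv.ne
  have hlen : P.length + 1 ≤ kmax := by simpa [Q] using hkub u _ hc hcH
  rw [dist_eq_one_iff_adj.2 huv, SimpleGraph.dist_comm, ← hPlen]
  have : (P.length : ℝ) + 1 ≤ kmax := by exact_mod_cast hlen
  push_cast
  linarith

/-- Let `H` be a biconnected component (with at least two vertices) of a connected graph
`G` and let `kmax` be the maximum length of a min-cycle of `G` all of whose vertices lie
in `H`. Then deleting any edge `{u,v}` of `G` with both endpoints in `H` increases the
distance between `u` and `v` by at most `kmax - 2`. -/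
theorem delete_edge_dist_increase {V : Type*} [Fintype V]
    (G : SimpleGraph V) (hG : G.Connected)
    (H : Set V) (hH : IsBiconnectedComponent G H)
    (hH2 : ∃ x ∈ H, ∃ y ∈ H, x ≠ y)
    (kmax : ℕ)
    (hkex : ∃ (a : V) (c : G.Walk a a), IsMinCycle c ∧ (∀ x ∈ c.support, x ∈ H) ∧
      c.length = kmax)
    (hkub : ∀ (a : V) (c : G.Walk a a), IsMinCycle c → (∀ x ∈ c.support, x ∈ H) →
      c.length ≤ kmax)
    (u v : V) (hu : u ∈ H) (hv : v ∈ H) (huv : G.Adj u v) :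
    ((G.deleteEdges {s(u,v)}).dist u v : ℝ) ≤ G.dist u v + kmax - 2 :=
  delete_edge_dist_increase_general G H hH kmax hkub u v hu hv huv
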